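/- arXiv:2103.00627 — 4 statements merged into one kernel-verified Lean document; each statement's English description precedes it below -/
import Mathlib

section
/- Let B be a positive integer, β ∈ (0,1), and let φ^{[1]}, …, φ^{[B]} be {0,1}-valued random variables on a common probability space with E(φ^{[b]}) ≤ β for each b. Let V = φ^{[1]} + … + φ^{[B]}. Let k be an integer with 1 ≤ k ≤ B and let λ be a non-negative integer such that Σ_{u=0}^{k−1} P(V ∈ [k−u, k)) ≥ Σ_{u=0}^{λ} P(V ∈ [k, k+u)). Then P(V ≥ k) ≤ Bβ/(k + λ). -/
open MeasureTheory Finset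

open scoped ENNReal

/-!
By the discrete layer-cake bound, `∑_{u=1}^{N} P(V ≥ u) ≤ E V` for every `N`. For `u ≤ k` the term
`P(V ≥ u)` is `P(V ≥ k) + P(u ≤ V < k)`, and for `k < u ≤ k + λ` it is `P(V ≥ k) - P(k ≤ V < u)`.
Hence the first `k + λ` terms add up to `(k + λ) P(V ≥ k)` plus
`∑_{u<k} P(k - u ≤ V < k) - ∑_{u≤λ} P(k ≤ V < k + u)`, which the shape condition makes
non-negative; so `(k + λ) P(V ≥ k) ≤ E V ≤ Bβ`.
-/

theorem sum_range_boole_le_ofReal (N : ℕ) (x : ℝ) :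
    ∑ u ∈ range N, (if (u : ℝ) + 1 ≤ x then (1 : ℝ≥0∞) else 0) ≤ ENNReal.ofReal x := by
  rw [sum_boole]
  have hsub : {u ∈ range N | ((u : ℕ) : ℝ) + 1 ≤ x} ⊆ range ⌊x⌋₊ := fun u hu => by
    rw [mem_filter] at hu
    rw [mem_range, Nat.lt_iff_add_one_le]
    exact Nat.le_floor (by exact_mod_cast hu.2)
  calc (#{u ∈ range N | ((u : ℕ) : ℝ) + 1 ≤ x} : ℝ≥0∞)
      ≤ ⌊x⌋₊ := by simpa using card_le_card hsub
    _ ≤ ENNReal.ofReal x := by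
      rcases le_or_gt 0 x with hx | hx
      · rw [← ENNReal.ofReal_natCast]
        exact ENNReal.ofReal_le_ofReal (Nat.floor_le hx)
      · simp [Nat.floor_eq_zero.mpr (hx.trans one_pos)]

section TailSums

variable {Ω : Type*} [MeasurableSpace Ω] (μ : Measure Ω) {V : Ω → ℝ}

theorem sum_range_meas_ge_le_lintegral (hV : Measurable V) (N : ℕ) :
    ∑ u ∈ range N, μ {ω | (u : ℝ) + 1 ≤ V ω} ≤ ∫⁻ ω, ENNReal.ofReal (V ω) ∂μ := by
  have hset : ∀ u : ℕ, MeasurableSet {ω | (u : ℝ) + 1 ≤ V ω} := fun u =>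
    measurableSet_le measurable_const hV
  calc ∑ u ∈ range N, μ {ω | (u : ℝ) + 1 ≤ V ω}
      = ∑ u ∈ range N, ∫⁻ ω, {ω | (u : ℝ) + 1 ≤ V ω}.indicator 1 ω ∂μ :=
        sum_congr rfl fun u _ => (lintegral_indicator_one (hset u)).symm
    _ = ∫⁻ ω, ∑ u ∈ range N, {ω | (u : ℝ) + 1 ≤ V ω}.indicator 1 ω ∂μ :=
        (lintegral_finsetSum _ fun u _ => measurable_one.indicator (hset u)).symm
    _ ≤ ∫⁻ ω, ENNReal.ofReal (V ω) ∂μ := lintegral_mono fun ω => by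
        simpa only [Set.indicator_apply, Set.mem_ofPred_eq, Pi.one_apply]
          using sum_range_boole_le_ofReal N (V ω)

theorem meas_ge_eq_meas_ge_add_meas_Ico (hV : Measurable V) {a b : ℝ} (hab : a ≤ b) :
    μ {ω | a ≤ V ω} = μ {ω | b ≤ V ω} + μ {ω | a ≤ V ω ∧ V ω < b} := by
  rw [← measure_inter_add_sdiff {ω | a ≤ V ω} (measurableSet_le measurable_const hV)]
  congr 2
  · ext ω
    exact ⟨fun h => h.2, fun h => ⟨hab.trans h, h⟩⟩
  · ext ω
    simp only [Set.mem_sdiff, Set.mem_ofPred_eq, not_le]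

theorem sum_range_meas_ge_eq_mul_add_sum_meas_Ico (hV : Measurable V) (k : ℕ) :
    ∑ u ∈ range k, μ {ω | (u : ℝ) + 1 ≤ V ω}
      = k * μ {ω | (k : ℝ) ≤ V ω} + ∑ u ∈ range k, μ {ω | (k : ℝ) - u ≤ V ω ∧ V ω < k} := by
  have hsplit : ∀ u ∈ range k, μ {ω | (u : ℝ) + 1 ≤ V ω}
      = μ {ω | (k : ℝ) ≤ V ω} + μ {ω | (u : ℝ) + 1 ≤ V ω ∧ V ω < k} := fun u hu =>
    meas_ge_eq_meas_ge_add_meas_Ico μ hV (by exact_mod_cast mem_range.mp hu)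
  rw [sum_congr rfl hsplit, sum_add_distrib, sum_const, card_range, nsmul_eq_mul,
    ← sum_range_reflect _ k]
  refine congrArg _ (sum_congr rfl fun u hu => ?_)
  have hcast : ((k - 1 - u : ℕ) : ℝ) + 1 = k - u := by
    have hu' := mem_range.mp hu
    rw [Nat.cast_sub (by omega), Nat.cast_sub (by omega)]
    push_cast
    ring
  rw [hcast]

theorem sum_range_meas_ge_add_sum_meas_Ico_eq_mul (hV : Measurable V) (k lam : ℕ) :
    ∑ u ∈ range lam, μ {ω | ((k + u : ℕ) : ℝ) + 1 ≤ V ω}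
        + ∑ u ∈ range (lam + 1), μ {ω | (k : ℝ) ≤ V ω ∧ V ω < k + u}
      = lam * μ {ω | (k : ℝ) ≤ V ω} := by
  have hsplit : ∀ u ∈ range lam, μ {ω | ((k + u : ℕ) : ℝ) + 1 ≤ V ω}
      + μ {ω | (k : ℝ) ≤ V ω ∧ V ω < k + (u + 1 : ℕ)} = μ {ω | (k : ℝ) ≤ V ω} := by
    intro u _
    rw [meas_ge_eq_meas_ge_add_meas_Ico μ hV (a := k) (b := k + (u + 1 : ℕ))
      (le_add_of_nonneg_right (Nat.cast_nonneg _))]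
    push_cast
    ring_nf
  have hempty : {ω | (k : ℝ) ≤ V ω ∧ V ω < k + ((0 : ℕ) : ℝ)} = ∅ := by
    ext ω
    simp
  rw [sum_range_succ', hempty, measure_empty, add_zero, ← sum_add_distrib, sum_congr rfl hsplit,
    sum_const, card_range, nsmul_eq_mul]

theorem natCast_mul_meas_ge_le_lintegral_of_shape [IsFiniteMeasure μ] (hV : Measurable V)
    (k lam : ℕ)
    (hshape : ∑ u ∈ range (lam + 1), μ {ω | (k : ℝ) ≤ V ω ∧ V ω < k + u}
      ≤ ∑ u ∈ range k, μ {ω | (k : ℝ) - u ≤ V ω ∧ V ω < k}) :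
    ((k + lam : ℕ) : ℝ≥0∞) * μ {ω | (k : ℝ) ≤ V ω} ≤ ∫⁻ ω, ENNReal.ofReal (V ω) ∂μ := by
  set A := ∑ u ∈ range k, μ {ω | (k : ℝ) - u ≤ V ω ∧ V ω < k}
  have hA : A ≠ ∞ := ENNReal.sum_ne_top.mpr fun _ _ => measure_ne_top μ _
  refine (ENNReal.add_le_add_iff_right hA).mp ?_
  calc ((k + lam : ℕ) : ℝ≥0∞) * μ {ω | (k : ℝ) ≤ V ω} + A
      = ∑ u ∈ range (k + lam), μ {ω | (u : ℝ) + 1 ≤ V ω}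
          + ∑ u ∈ range (lam + 1), μ {ω | (k : ℝ) ≤ V ω ∧ V ω < k + u} := by
        rw [sum_range_add, sum_range_meas_ge_eq_mul_add_sum_meas_Ico μ hV, add_assoc,
          sum_range_meas_ge_add_sum_meas_Ico_eq_mul μ hV]
        push_cast
        ring
    _ ≤ ∫⁻ ω, ENNReal.ofReal (V ω) ∂μ + A :=
        add_le_add (sum_range_meas_ge_le_lintegral μ hV _) hshape

end TailSums

theorem lintegral_ofReal_sum_le {Ω ι : Type*} [MeasurableSpace Ω] [Fintype ι] {μ : Measure Ω}
    {f : ι → Ω → ℝ} {β : ℝ} (hint : ∀ i, Integrable (f i) μ) (hnonneg : ∀ i ω, 0 ≤ f i ω)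
    (hE : ∀ i, ∫ ω, f i ω ∂μ ≤ β) :
    ∫⁻ ω, ENNReal.ofReal (∑ i, f i ω) ∂μ ≤ ENNReal.ofReal (Fintype.card ι * β) := by
  rw [← ofReal_integral_eq_lintegral_ofReal (integrable_finsetSum _ fun i _ => hint i)
    (Filter.Eventually.of_forall fun ω => sum_nonneg fun i _ => hnonneg i ω)]
  refine ENNReal.ofReal_le_ofReal ?_
  calc ∫ ω, ∑ i, f i ω ∂μ = ∑ i, ∫ ω, f i ω ∂μ := integral_finsetSum _ fun i _ => hint i
    _ ≤ ∑ _i : ι, β := sum_le_sum fun i _ => hE i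
    _ = Fintype.card ι * β := by simp

theorem ENNReal.le_ofReal_div_of_natCast_mul_le {a : ℝ≥0∞} {c : ℝ} {n : ℕ} (hn : n ≠ 0)
    (h : n * a ≤ ENNReal.ofReal c) : a ≤ ENNReal.ofReal (c / n) := by
  rw [ENNReal.ofReal_div_of_pos (by positivity), ENNReal.ofReal_natCast,
    ENNReal.le_div_iff_mul_le (Or.inl (by exact_mod_cast hn)) (Or.inl (ENNReal.natCast_ne_top n)),
    mul_comm]
  exact h

theorem multisplit_markov_general {Ω : Type*} [MeasurableSpace Ω]
    (μ : Measure Ω) [IsProbabilityMeasure μ]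
    (B : ℕ) (β : ℝ)
    (φ : Fin B → Ω → ℝ) (hmeas : ∀ b, Measurable (φ b))
    (hval : ∀ b ω, φ b ω = 0 ∨ φ b ω = 1)
    (hE : ∀ b, ∫ ω, φ b ω ∂μ ≤ β)
    (k lam : ℕ) (hk : 1 ≤ k)
    (hshape :
      ∑ u ∈ Finset.range (lam + 1),
          μ {ω | (k : ℝ) ≤ ∑ b, φ b ω ∧ ∑ b, φ b ω < (k : ℝ) + u}
        ≤ ∑ u ∈ Finset.range k,
            μ {ω | (k : ℝ) - u ≤ ∑ b, φ b ω ∧ ∑ b, φ b ω < (k : ℝ)}) :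
    μ {ω | (k : ℝ) ≤ ∑ b, φ b ω} ≤ ENNReal.ofReal (B * β / (k + lam)) := by
  have hbound : ∀ b ω, 0 ≤ φ b ω ∧ φ b ω ≤ 1 := fun b ω => by
    rcases hval b ω with h | h <;> simp [h]
  have hint : ∀ b, Integrable (φ b) μ := fun b =>
    .of_bound (hmeas b).aestronglyMeasurable 1 (.of_forall fun ω => by
      rw [Real.norm_of_nonneg (hbound b ω).1]
      exact (hbound b ω).2)
  have hsum : Measurable fun ω => ∑ b, φ b ω := Finset.measurable_fun_sum _ fun b _ => hmeas b
  have hmean := lintegral_ofReal_sum_le hint (fun b ω => (hbound b ω).1) hE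
  rw [Fintype.card_fin] at hmean
  have key := (natCast_mul_meas_ge_le_lintegral_of_shape μ hsum k lam hshape).trans hmean
  simpa using ENNReal.le_ofReal_div_of_natCast_mul_le (by omega) key

/-- Theorem 2 of the paper: if `φ 1, …, φ B` are {0,1}-valued random
variables with `E(φ b) ≤ β`, `V = Σ_b φ b`, and `λ` is a non-negative integer with
`Σ_{u=0}^{k-1} P(V ∈ [k-u, k)) ≥ Σ_{u=0}^{λ} P(V ∈ [k, k+u))`, then
`P(V ≥ k) ≤ Bβ/(k+λ)`. -/
theorem multisplit_markov {Ω : Type*} [MeasurableSpace Ω]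
    (μ : Measure Ω) [IsProbabilityMeasure μ]
    (B : ℕ) (hB : 1 ≤ B) (β : ℝ) (hβ : β ∈ Set.Ioo (0 : ℝ) 1)
    (φ : Fin B → Ω → ℝ) (hmeas : ∀ b, Measurable (φ b))
    (hval : ∀ b ω, φ b ω = 0 ∨ φ b ω = 1)
    (hE : ∀ b, ∫ ω, φ b ω ∂μ ≤ β)
    (k lam : ℕ) (hk : 1 ≤ k) (hkB : k ≤ B)
    (hshape :
      ∑ u ∈ Finset.range (lam + 1),
          μ {ω | (k : ℝ) ≤ ∑ b, φ b ω ∧ ∑ b, φ b ω < (k : ℝ) + u}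
        ≤ ∑ u ∈ Finset.range k,
            μ {ω | (k : ℝ) - u ≤ ∑ b, φ b ω ∧ ∑ b, φ b ω < (k : ℝ)}) :
    μ {ω | (k : ℝ) ≤ ∑ b, φ b ω} ≤ ENNReal.ofReal (B * β / (k + lam)) :=
  multisplit_markov_general μ B β φ hmeas hval hE k lam hk hshape
end

section
/- Let V be a random variable taking values in the non-negative integers, let k ≥ 1 be an integer and λ ≥ 0 an integer satisfying Σ_{u=0}^{k−1} P(V ∈ [k−u, k)) ≥ Σ_{u=0}^{λ} P(V ∈ [k, k+u)), and let U be a random variable uniformly distributed on the interval (−λ, k) and independent of V. Then P(V ≥ k) ≤ P(V + U ≥ k). -/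
/-!
With `C := ⌈k - U⌉₊`, the event `k ≤ V + U` is exactly `C ≤ V`, because `V` is integer valued.
The variable `C` is independent of `V` and uniform on `{1, …, k + λ}`, so
`P(V + U ≥ k) = (k + λ)⁻¹ ∑_{m=1}^{k+λ} P(V ≥ m)`. Compared with `P(V ≥ k)`, the terms `m = k - u`
with `u < k` exceed it by `P(k - u ≤ V < k)`, and the terms `m = k + u` with `u ≤ λ` fall short of
it by `P(k ≤ V < k + u)`; the shape condition says precisely that the excess wins.
-/

open MeasureTheory ProbabilityTheory

namespace MeasureTheory.pdf.IsUniform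

variable {Ω E : Type*} [MeasurableSpace Ω] [MeasurableSpace E] {P : Measure Ω} {μ : Measure E}
  {X : Ω → E} {s : Set E}

theorem measure_ne_zero [NeZero P] (hX : AEMeasurable X P) (hu : IsUniform X s P μ) :
    μ s ≠ 0 := fun hs ↦ by
  have : P.map X = 0 := by rw [hu]; exact cond_eq_zero_of_meas_eq_zero hs
  exact NeZero.ne P ((Measure.map_eq_zero_iff hX).mp this)

theorem ae_mem (hns : μ s ≠ 0) (hnt : μ s ≠ ⊤) (hms : MeasurableSet s)
    (hu : IsUniform X s P μ) : ∀ᵐ ω ∂P, X ω ∈ s := by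
  rw [ae_iff]
  change P (X ⁻¹' sᶜ) = 0
  rw [hu.measure_preimage hns hnt hms.compl, Set.inter_compl_self, measure_empty, ENNReal.zero_div]

end MeasureTheory.pdf.IsUniform

section DiscreteValues

variable {Ω α : Type*} [MeasurableSpace Ω] {μ : Measure Ω} [IsFiniteMeasure μ]
  [LinearOrder α] [MeasurableSpace α] [DiscreteMeasurableSpace α] {X C : Ω → α}

theorem measureReal_le_eq_add (hX : Measurable X) {a b : α} (hab : a ≤ b) :
    μ.real {ω | a ≤ X ω} = μ.real {ω | b ≤ X ω} + μ.real {ω | a ≤ X ω ∧ X ω < b} := by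
  have hsplit : {ω | a ≤ X ω} = X ⁻¹' Set.Ico a b ∪ X ⁻¹' Set.Ici b := by
    rw [← Set.preimage_union, Set.Ico_union_Ici_eq_Ici hab]; rfl
  rw [hsplit, measureReal_union _ (hX .of_discrete), add_comm]
  · rfl
  · exact ((Set.Iio_disjoint_Ici le_rfl).mono_left Set.Ico_subset_Iio_self).preimage X

theorem measureReal_le_eq_sum_of_indepFun (hX : Measurable X) (hC : Measurable C)
    (hXC : IndepFun X C μ) {s : Finset α} (hs : ∀ᵐ ω ∂μ, C ω ∈ s) :
    μ.real {ω | C ω ≤ X ω} = ∑ b ∈ s, μ.real {ω | b ≤ X ω} * μ.real (C ⁻¹' {b}) := by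
  have hconull : μ (C ⁻¹' s)ᶜ = 0 := by rwa [ae_iff] at hs
  have hfibers : {ω | C ω ≤ X ω} ∩ C ⁻¹' s = ⋃ b ∈ s, X ⁻¹' Set.Ici b ∩ C ⁻¹' {b} := by
    ext ω; simp
  rw [measureReal_def, ← measure_inter_conull hconull, ← measureReal_def, hfibers,
    measureReal_biUnion_finset]
  · refine Finset.sum_congr rfl fun b _ ↦ ?_
    rw [measureReal_def, hXC.measure_inter_preimage_eq_mul _ _ .of_discrete .of_discrete,
      ENNReal.toReal_mul]
    rfl
  · exact fun b _ b' _ hbb' ↦ Set.disjoint_left.mpr fun ω h h' ↦ hbb' (h.2.symm.trans h'.2)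
  · exact fun b _ ↦ (hX .of_discrete).inter (hC .of_discrete)

end DiscreteValues

theorem volume_Ioo_inter_Ico_of_le {a b c d : ℝ} (hac : a ≤ c) (hdb : d ≤ b) :
    volume (Set.Ioo a b ∩ Set.Ico c d) = ENNReal.ofReal (d - c) := by
  apply le_antisymm
  · exact Real.volume_Ico ▸ measure_mono Set.inter_subset_right
  · exact Real.volume_Ioo ▸ measure_mono
      (Set.subset_inter (Set.Ioo_subset_Ioo hac hdb) Set.Ioo_subset_Ico_self)

section UniformCeil

variable {Ω : Type*} {U : Ω → ℝ} {a : ℝ}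

theorem natCeil_sub_preimage_singleton {m : ℕ} (hm : m ≠ 0) :
    (fun ω ↦ ⌈a - U ω⌉₊) ⁻¹' {m} = U ⁻¹' Set.Ico (a - m) (a - m + 1) := by
  ext ω
  simp only [Set.mem_preimage, Set.mem_singleton_iff, Nat.ceil_eq_iff hm, Set.mem_Ico,
    Nat.cast_pred (Nat.pos_of_ne_zero hm)]
  constructor <;> rintro ⟨h₁, h₂⟩ <;> constructor <;> linarith

variable [MeasurableSpace Ω] {μ : Measure Ω} {n : ℕ}

theorem measureReal_natCeil_sub_eq (hn : n ≠ 0) (hU : pdf.IsUniform U (Set.Ioo (a - n) a) μ)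
    {m : ℕ} (hm : m ∈ Finset.Icc 1 n) :
    μ.real ((fun ω ↦ ⌈a - U ω⌉₊) ⁻¹' {m}) = (n : ℝ)⁻¹ := by
  obtain ⟨hm₁, hmn⟩ := Finset.mem_Icc.mp hm
  have hvol : volume (Set.Ioo (a - n) a) = n := by simp
  rw [natCeil_sub_preimage_singleton (by omega), measureReal_def,
    hU.measure_preimage (by simp [hvol, hn]) (by simp [hvol]) measurableSet_Ico, hvol,
    volume_Ioo_inter_Ico_of_le (by linarith [(by exact_mod_cast hmn : (m : ℝ) ≤ n)])
      (by linarith [(by exact_mod_cast hm₁ : (1 : ℝ) ≤ m)])]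
  simp

theorem ae_natCeil_sub_mem (hn : n ≠ 0) (hU : pdf.IsUniform U (Set.Ioo (a - n) a) μ) :
    ∀ᵐ ω ∂μ, ⌈a - U ω⌉₊ ∈ Finset.Icc 1 n := by
  have hvol : volume (Set.Ioo (a - n) a) = n := by simp
  filter_upwards [hU.ae_mem (by simp [hvol, hn]) (by simp [hvol]) measurableSet_Ioo] with ω hω
  rw [Finset.mem_Icc, Nat.one_le_ceil_iff, Nat.ceil_le]
  constructor <;> linarith [hω.1, hω.2]

theorem measureReal_le_natCast_add_eq [IsFiniteMeasure μ] {V : Ω → ℕ} (hV : Measurable V)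
    (hU : Measurable U) (hn : n ≠ 0) (hunif : pdf.IsUniform U (Set.Ioo (a - n) a) μ)
    (hindep : IndepFun V U μ) :
    μ.real {ω | a ≤ V ω + U ω} = (∑ m ∈ Finset.Icc 1 n, μ.real {ω | m ≤ V ω}) / n := by
  have hevent : {ω | a ≤ V ω + U ω} = {ω | ⌈a - U ω⌉₊ ≤ V ω} := by
    ext ω; simp [Nat.ceil_le]
  have hCV : IndepFun V (fun ω ↦ ⌈a - U ω⌉₊) μ :=
    hindep.comp measurable_id (measurable_id.const_sub _).nat_ceil
  rw [hevent, measureReal_le_eq_sum_of_indepFun hV (hU.const_sub _).nat_ceil hCV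
    (ae_natCeil_sub_mem hn hunif), Finset.sum_div]
  exact Finset.sum_congr rfl fun m hm ↦ by
    rw [measureReal_natCeil_sub_eq hn hunif hm, div_eq_mul_inv]

end UniformCeil

open Finset in
theorem sum_Icc_one_add_eq {M : Type*} [AddCommMonoid M] (f : ℕ → M) (k l : ℕ) :
    ∑ m ∈ Icc 1 (k + l), f m = ∑ u ∈ range k, f (k - u) + ∑ u ∈ range l, f (k + u + 1) := by
  have hlow : ∑ m ∈ Icc 1 k, f m = ∑ u ∈ range k, f (k - u) :=
    sum_nbij' (fun m ↦ k - m) (fun u ↦ k - u) (by simp; omega) (by simp; omega)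
      (by simp; omega) (by simp; omega) fun m hm ↦ by rw [mem_Icc] at hm; congr 1; omega
  rw [← hlow, ← Ico_add_one_right_eq_Icc, ← Ico_add_one_right_eq_Icc,
    ← sum_Ico_consecutive f (n := k + 1) (by omega) (by omega), sum_Ico_eq_sum_range f (k + 1)]
  congr 1
  refine sum_congr (by congr 1; omega) fun u _ ↦ by rw [add_right_comm]

open Finset in
theorem mul_measureReal_le_sum_Icc {Ω : Type*} [MeasurableSpace Ω] {μ : Measure Ω}
    [IsFiniteMeasure μ] {X : Ω → ℕ} (hX : Measurable X) {k l : ℕ}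
    (hshape : ∑ u ∈ range (l + 1), μ.real {ω | k ≤ X ω ∧ X ω < k + u}
      ≤ ∑ u ∈ range k, μ.real {ω | k - u ≤ X ω ∧ X ω < k}) :
    (k + l) * μ.real {ω | k ≤ X ω} ≤ ∑ m ∈ Icc 1 (k + l), μ.real {ω | m ≤ X ω} := by
  have hbelow : ∑ u ∈ range k, μ.real {ω | k - u ≤ X ω}
      = k * μ.real {ω | k ≤ X ω} + ∑ u ∈ range k, μ.real {ω | k - u ≤ X ω ∧ X ω < k} := by
    rw [sum_congr rfl fun u _ ↦ measureReal_le_eq_add hX (Nat.sub_le k u), sum_add_distrib,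
      sum_const, card_range, nsmul_eq_mul]
  have habove : ∑ u ∈ range (l + 1), μ.real {ω | k + u ≤ X ω}
      + ∑ u ∈ range (l + 1), μ.real {ω | k ≤ X ω ∧ X ω < k + u}
      = (l + 1) * μ.real {ω | k ≤ X ω} := by
    rw [← sum_add_distrib,
      sum_congr rfl fun u _ ↦ (measureReal_le_eq_add hX (k.le_add_right u)).symm,
      sum_const, card_range, nsmul_eq_mul]
    push_cast; ring
  rw [sum_range_succ', add_zero] at habove
  simp only [← add_assoc] at habove
  rw [sum_Icc_one_add_eq]
  linarith

theorem smoothing_increases_tail_general {Ω : Type*} [MeasurableSpace Ω]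
    (μ : Measure Ω) [IsProbabilityMeasure μ]
    (V : Ω → ℕ) (hV : Measurable V) (U : Ω → ℝ) (hU : Measurable U)
    (k lam : ℕ)
    (hunif : pdf.IsUniform U (Set.Ioo (-(lam : ℝ)) k) μ volume)
    (hindep : IndepFun V U μ)
    (hshape :
      ∑ u ∈ Finset.range (lam + 1),
          μ {ω | (k : ℝ) ≤ (V ω : ℝ) ∧ (V ω : ℝ) < (k : ℝ) + u}
        ≤ ∑ u ∈ Finset.range k,
            μ {ω | (k : ℝ) - u ≤ (V ω : ℝ) ∧ (V ω : ℝ) < (k : ℝ)}) :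
    μ {ω | k ≤ V ω} ≤ μ {ω | (k : ℝ) ≤ (V ω : ℝ) + U ω} := by
  rw [show Set.Ioo (-(lam : ℝ)) k = Set.Ioo ((k : ℝ) - ↑(k + lam)) k by push_cast; ring_nf]
    at hunif
  have hL : k + lam ≠ 0 := by
    have hvol := hunif.measure_ne_zero hU.aemeasurable
    simp only [Real.volume_Ioo, sub_sub_cancel, ne_eq, ENNReal.ofReal_eq_zero, not_le] at hvol
    exact_mod_cast hvol.ne'
  have hcast_above : ∑ u ∈ Finset.range (lam + 1), μ {ω | (k : ℝ) ≤ V ω ∧ (V ω : ℝ) < k + u}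
      = ∑ u ∈ Finset.range (lam + 1), μ {ω | k ≤ V ω ∧ V ω < k + u} :=
    Finset.sum_congr rfl fun u _ ↦ by congr; ext; norm_cast
  have hcast_below : ∑ u ∈ Finset.range k, μ {ω | (k : ℝ) - u ≤ V ω ∧ (V ω : ℝ) < k}
      = ∑ u ∈ Finset.range k, μ {ω | k - u ≤ V ω ∧ V ω < k} :=
    Finset.sum_congr rfl fun u hu ↦ by
      rw [← Nat.cast_sub (Finset.mem_range.mp hu).le]; congr; ext; norm_cast
  rw [hcast_above, hcast_below] at hshape
  have htail := mul_measureReal_le_sum_Icc hV <| by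
    simpa only [measureReal_def, ENNReal.toReal_sum fun _ _ ↦ measure_ne_top _ _] using
      ENNReal.toReal_mono (ENNReal.sum_ne_top.mpr fun _ _ ↦ measure_ne_top _ _) hshape
  rw [← ENNReal.toReal_le_toReal (measure_ne_top _ _) (measure_ne_top _ _)]
  change μ.real _ ≤ μ.real _
  rw [measureReal_le_natCast_add_eq hV hU hL hunif hindep,
    le_div_iff₀ (by exact_mod_cast Nat.pos_of_ne_zero hL)]
  push_cast
  linarith

/-- for a non-negative integer valued random variable `V` satisfying the
shape condition `Σ_{u=0}^{k-1} P(V ∈ [k-u, k)) ≥ Σ_{u=0}^{λ} P(V ∈ [k, k+u))`, and `U`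
uniform on `(-λ, k)` independent of `V`, one has `P(V ≥ k) ≤ P(V + U ≥ k)`. -/
theorem smoothing_increases_tail {Ω : Type*} [MeasurableSpace Ω]
    (μ : Measure Ω) [IsProbabilityMeasure μ]
    (V : Ω → ℕ) (hV : Measurable V) (U : Ω → ℝ) (hU : Measurable U)
    (k lam : ℕ) (hk : 1 ≤ k)
    (hunif : pdf.IsUniform U (Set.Ioo (-(lam : ℝ)) k) μ volume)
    (hindep : IndepFun V U μ)
    (hshape :
      ∑ u ∈ Finset.range (lam + 1),
          μ {ω | (k : ℝ) ≤ (V ω : ℝ) ∧ (V ω : ℝ) < (k : ℝ) + u}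
        ≤ ∑ u ∈ Finset.range k,
            μ {ω | (k : ℝ) - u ≤ (V ω : ℝ) ∧ (V ω : ℝ) < (k : ℝ)}) :
    μ {ω | k ≤ V ω} ≤ μ {ω | (k : ℝ) ≤ (V ω : ℝ) + U ω} :=
  smoothing_increases_tail_general μ V hV U hU k lam hunif hindep hshape
end

section
/- Let V be a random variable taking values in the non-negative integers, let k ≥ 1 be an integer and λ ≥ 0 an integer, and let U be a random variable uniformly distributed on the interval (−λ, k) and independent of V. Then P(V + U ≥ k) ≤ E(V)/(k + λ). -/
open MeasureTheory ProbabilityTheory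

/-- uniformly-smoothed Markov inequality: for a non-negative integer
valued random variable `V` and `U` uniform on `(-λ, k)` independent of `V`,
`P(V + U ≥ k) ≤ E(V)/(k + λ)`. -/
theorem smoothed_markov {Ω : Type*} [MeasurableSpace Ω]
    (μ : Measure Ω) [IsProbabilityMeasure μ]
    (V : Ω → ℕ) (hV : Measurable V) (U : Ω → ℝ) (hU : Measurable U)
    (k lam : ℕ) (hk : 1 ≤ k)
    (hunif : pdf.IsUniform U (Set.Ioo (-(lam : ℝ)) k) μ volume)
    (hindep : IndepFun V U μ) :
    μ {ω | (k : ℝ) ≤ (V ω : ℝ) + U ω}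
      ≤ (∫⁻ ω, (V ω : ENNReal) ∂μ) / ((k : ENNReal) + lam) := by
  set s : Set ℝ := Set.Ioo (-(lam : ℝ)) k with hs
  have hlt : (-(lam : ℝ)) < k := by
    have : (0:ℝ) < k := by exact_mod_cast hk
    have : (0:ℝ) ≤ lam := Nat.cast_nonneg lam
    linarith
  have hvol : volume s = (k : ENNReal) + lam := by
    rw [hs, Real.volume_Ioo]
    rw [show (k:ℝ) - (-(lam:ℝ)) = (k:ℝ) + lam by ring]
    rw [← Nat.cast_add, ENNReal.ofReal_natCast, Nat.cast_add]
  have hns : volume s ≠ 0 := by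
    rw [hvol]
    have hk0 : (k:ENNReal) ≠ 0 := Nat.cast_ne_zero.mpr (by omega)
    intro h
    exact hk0 (add_eq_zero.mp h).1
  have hnt : volume s ≠ ⊤ := by rw [hvol]; simp
  -- measure of U ≥ t events
  have hUpre : ∀ n : ℕ, μ (U ⁻¹' Set.Ici ((k:ℝ) - n)) ≤ (n : ENNReal) / ((k:ENNReal) + lam) := by
    intro n
    rw [hunif.measure_preimage hns hnt measurableSet_Ici, hvol]
    refine ENNReal.div_le_div_right ?_ _
    calc volume (s ∩ Set.Ici ((k:ℝ) - n))
        ≤ volume (Set.Ico ((k:ℝ) - n) k) := by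
          apply measure_mono
          rintro x ⟨⟨_, hx2⟩, hx3⟩
          exact ⟨hx3, hx2⟩
      _ = (n : ENNReal) := by
          rw [Real.volume_Ico, show (k:ℝ) - ((k:ℝ) - n) = n by ring, ENNReal.ofReal_natCast]
  -- decompose event
  have hdecomp : {ω | (k : ℝ) ≤ (V ω : ℝ) + U ω}
      = ⋃ n : ℕ, (V ⁻¹' {n} ∩ U ⁻¹' Set.Ici ((k:ℝ) - n)) := by
    ext ω
    simp only [Set.mem_setOf_eq, Set.mem_iUnion, Set.mem_inter_iff, Set.mem_preimage,
      Set.mem_singleton_iff, Set.mem_Ici]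
    constructor
    · intro h; exact ⟨V ω, rfl, by linarith⟩
    · rintro ⟨n, rfl, h⟩; linarith
  rw [hdecomp]
  have hmeas : ∀ n : ℕ, MeasurableSet (V ⁻¹' {n} ∩ U ⁻¹' Set.Ici ((k:ℝ) - n)) := fun n =>
    (hV (measurableSet_singleton n)).inter (hU measurableSet_Ici)
  calc μ (⋃ n : ℕ, (V ⁻¹' {n} ∩ U ⁻¹' Set.Ici ((k:ℝ) - n)))
      ≤ ∑' n : ℕ, μ (V ⁻¹' {n} ∩ U ⁻¹' Set.Ici ((k:ℝ) - n)) := measure_iUnion_le _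
    _ = ∑' n : ℕ, μ (V ⁻¹' {n}) * μ (U ⁻¹' Set.Ici ((k:ℝ) - n)) := by
        congr 1; funext n
        exact hindep.measure_inter_preimage_eq_mul _ _ (measurableSet_singleton n)
          measurableSet_Ici
    _ ≤ ∑' n : ℕ, μ (V ⁻¹' {n}) * ((n : ENNReal) / ((k:ENNReal) + lam)) := by
        exact ENNReal.tsum_le_tsum fun n => mul_le_mul_right (hUpre n) _
    _ = (∑' n : ℕ, μ (V ⁻¹' {n}) * n) / ((k:ENNReal) + lam) := by
        simp_rw [div_eq_mul_inv, ← mul_assoc]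
        exact ENNReal.tsum_mul_right
    _ = (∫⁻ ω, (V ω : ENNReal) ∂μ) / ((k : ENNReal) + lam) := by
        congr 1
        rw [← lintegral_map measurable_from_nat hV, lintegral_countable']
        exact tsum_congr fun n => by
          rw [Measure.map_apply hV (measurableSet_singleton n), mul_comm]
end

section
/- Let B be a positive integer, α ∈ (0,1), let k be an integer with 1 ≤ k ≤ B and λ a non-negative integer; set τ = 1 − k/B and β = α(1 − τ + λ/B) = α(k + λ)/B, and assume β < 1. Let φ^{[1]}, …, φ^{[B]} be {0,1}-valued random variables with E(φ^{[b]}) ≤ β for each b, let V = φ^{[1]} + … + φ^{[B]}, and suppose Σ_{u=0}^{k−1} P(V ∈ [k−u, k)) ≥ Σ_{u=0}^{λ} P(V ∈ [k, k+u)). Then P(V ≥ k) ≤ α, i.e., with Π = 1 − V/B, P(Π > τ) ≥ 1 − α. -/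
/-!
Every natural number `n` satisfies
`(k + λ)·1{n ≥ k} + #{u < k | k - u ≤ n < k} ≤ n + #{u ≤ λ | k ≤ n < k + u}`:
for `n ≥ k` the right-hand count is `k + λ - n`, and for `n < k` the left-hand count is `n`.
Taking expectations at `n = V` gives
`(k + λ) P(V ≥ k) + Σ_{u<k} P(k - u ≤ V < k) ≤ E V + Σ_{u≤λ} P(k ≤ V < k + u)`,
where `E V ≤ B β = α (k + λ)` and, by the smoothing assumption, the last sum is at most the first.
-/

open MeasureTheory Finset
open scoped ENNReal

theorem card_filter_range_lt_add {k n : ℕ} (lam : ℕ) (h : k ≤ n) :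
    #{u ∈ range (lam + 1) | n < k + u} = k + lam - n := by
  have : {u ∈ range (lam + 1) | n < k + u} = Ico (n - k + 1) (lam + 1) := by
    ext u; simp only [mem_filter, mem_range, mem_Ico]; omega
  rw [this, Nat.card_Ico]; omega

theorem card_filter_range_le_add {k n : ℕ} (h : n ≤ k) :
    #{u ∈ range k | k ≤ n + u} = n := by
  have : {u ∈ range k | k ≤ n + u} = Ico (k - n) k := by
    ext u; simp only [mem_filter, mem_range, mem_Ico]; omega
  rw [this, Nat.card_Ico]; omega

theorem smoothed_markov_pointwise (k lam n : ℕ) :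
    ((k + lam : ℕ) : ℝ≥0∞) * (Set.Ici (k : ℝ)).indicator 1 (n : ℝ)
        + ∑ u ∈ range k, (Set.Ico ((k : ℝ) - u) k).indicator 1 (n : ℝ)
      ≤ n + ∑ u ∈ range (lam + 1), (Set.Ico (k : ℝ) (k + u)).indicator 1 (n : ℝ) := by
  simp only [Set.indicator_apply, Set.mem_Ici, Set.mem_Ico, Pi.one_apply, sub_le_iff_le_add]
  norm_cast
  simp only [sum_boole]
  by_cases hkn : k ≤ n
  · simp only [hkn, not_lt.2 hkn, and_false, true_and, filter_false, card_empty, if_true,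
      card_filter_range_lt_add lam hkn]
    norm_cast
    omega
  · rw [not_le] at hkn
    simp only [not_le.2 hkn, hkn, and_true, false_and, filter_false, card_empty, if_false,
      card_filter_range_le_add hkn.le]
    norm_cast
    omega

theorem exists_nat_sum_eq_of_zero_or_one {ι : Type*} (s : Finset ι) {x : ι → ℝ}
    (hx : ∀ i ∈ s, x i = 0 ∨ x i = 1) : ∃ n : ℕ, ∑ i ∈ s, x i = n := by
  refine ⟨#{i ∈ s | x i = 1}, ?_⟩
  rw [natCast_card_filter]
  exact sum_congr rfl fun i hi => by rcases hx i hi with h | h <;> simp [h]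

section
variable {Ω : Type*} [MeasurableSpace Ω] {μ : Measure Ω}

theorem lintegral_indicator_one_comp {X : Type*} [MeasurableSpace X] {f : Ω → X}
    (hf : Measurable f) {s : Set X} (hs : MeasurableSet s) :
    ∫⁻ ω, s.indicator 1 (f ω) ∂μ = μ (f ⁻¹' s) := by
  rw [← lintegral_indicator_one (hf hs)]
  rfl

theorem smoothed_markov_s8 {V : Ω → ℝ} (hV : Measurable V) (hnat : ∀ ω, ∃ n : ℕ, V ω = n)
    (k lam : ℕ) :
    ((k + lam : ℕ) : ℝ≥0∞) * μ {ω | k ≤ V ω}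
        + ∑ u ∈ range k, μ {ω | (k : ℝ) - u ≤ V ω ∧ V ω < k}
      ≤ ∫⁻ ω, ENNReal.ofReal (V ω) ∂μ
        + ∑ u ∈ range (lam + 1), μ {ω | (k : ℝ) ≤ V ω ∧ V ω < k + u} := by
  have hind : ∀ {s : Set ℝ}, MeasurableSet s →
      Measurable fun ω => s.indicator (1 : ℝ → ℝ≥0∞) (V ω) :=
    fun hs => (measurable_one.indicator hs).comp hV
  calc ((k + lam : ℕ) : ℝ≥0∞) * μ {ω | k ≤ V ω}
        + ∑ u ∈ range k, μ {ω | (k : ℝ) - u ≤ V ω ∧ V ω < k}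
      = ∫⁻ ω, (((k + lam : ℕ) : ℝ≥0∞) * (Set.Ici (k : ℝ)).indicator 1 (V ω)
          + ∑ u ∈ range k, (Set.Ico ((k : ℝ) - u) k).indicator 1 (V ω)) ∂μ := by
        rw [lintegral_add_left ((hind measurableSet_Ici).const_mul _),
          lintegral_const_mul _ (hind measurableSet_Ici),
          lintegral_finsetSum _ fun u _ => hind measurableSet_Ico]
        simp only [lintegral_indicator_one_comp hV measurableSet_Ici,
          lintegral_indicator_one_comp hV measurableSet_Ico]
        rfl
    _ ≤ ∫⁻ ω, (ENNReal.ofReal (V ω)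
          + ∑ u ∈ range (lam + 1), (Set.Ico (k : ℝ) (k + u)).indicator 1 (V ω)) ∂μ := by
        refine lintegral_mono fun ω => ?_
        obtain ⟨n, hn⟩ := hnat ω
        rw [hn, ENNReal.ofReal_natCast]
        exact smoothed_markov_pointwise k lam n
    _ = ∫⁻ ω, ENNReal.ofReal (V ω) ∂μ
          + ∑ u ∈ range (lam + 1), μ {ω | (k : ℝ) ≤ V ω ∧ V ω < k + u} := by
        rw [lintegral_add_left hV.ennreal_ofReal,
          lintegral_finsetSum _ fun u _ => hind measurableSet_Ico]
        simp only [lintegral_indicator_one_comp hV measurableSet_Ico]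
        rfl

theorem measure_ge_le_of_smoothing [IsFiniteMeasure μ] {V : Ω → ℝ} (hV : Measurable V)
    (hnat : ∀ ω, ∃ n : ℕ, V ω = n) {k lam : ℕ} (hklam : 0 < k + lam) {α : ℝ}
    (hmean : ∫⁻ ω, ENNReal.ofReal (V ω) ∂μ ≤ ENNReal.ofReal (α * (k + lam)))
    (hshape : ∑ u ∈ range (lam + 1), μ {ω | (k : ℝ) ≤ V ω ∧ V ω < k + u}
        ≤ ∑ u ∈ range k, μ {ω | (k : ℝ) - u ≤ V ω ∧ V ω < k}) :
    μ {ω | k ≤ V ω} ≤ ENNReal.ofReal α := by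
  have hmean' : ∫⁻ ω, ENNReal.ofReal (V ω) ∂μ ≤ (k + lam : ℕ) * ENNReal.ofReal α := by
    rwa [mul_comm, ← ENNReal.ofReal_natCast, ← ENNReal.ofReal_mul' (by positivity), Nat.cast_add]
  have hcancel : (k + lam : ℕ) * μ {ω | k ≤ V ω} ≤ (k + lam : ℕ) * ENNReal.ofReal α := by
    refine (ENNReal.add_le_add_iff_right ?_).1
      ((smoothed_markov_s8 hV hnat k lam).trans (add_le_add hmean' hshape))
    exact ENNReal.sum_ne_top.2 fun u _ => measure_ne_top μ _
  exact (ENNReal.mul_le_mul_iff_right (by exact_mod_cast hklam.ne') (ENNReal.natCast_ne_top _)).1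
    hcancel

theorem lintegral_ofReal_sum_le_of_integral_le {ι : Type*} (s : Finset ι) {φ : ι → Ω → ℝ}
    (hint : ∀ i ∈ s, Integrable (φ i) μ) (hnn : ∀ i ∈ s, ∀ ω, 0 ≤ φ i ω) {c : ℝ}
    (hc : ∀ i ∈ s, ∫ ω, φ i ω ∂μ ≤ c) :
    ∫⁻ ω, ENNReal.ofReal (∑ i ∈ s, φ i ω) ∂μ ≤ ENNReal.ofReal (#s * c) := by
  rw [← ofReal_integral_eq_lintegral_ofReal (integrable_finsetSum s hint)
    (ae_of_all _ fun ω => sum_nonneg fun i hi => hnn i hi ω), integral_finsetSum s hint]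
  exact ENNReal.ofReal_le_ofReal ((sum_le_sum hc).trans_eq (by rw [sum_const, nsmul_eq_mul]))

end

theorem multisplit_coverage_smoothed_general {Ω : Type*} [MeasurableSpace Ω]
    (μ : Measure Ω) [IsProbabilityMeasure μ]
    (B : ℕ) (hB : 1 ≤ B) (α : ℝ)
    (k lam : ℕ) (hk : 1 ≤ k)
    (φ : Fin B → Ω → ℝ) (hmeas : ∀ b, Measurable (φ b))
    (hval : ∀ b ω, φ b ω = 0 ∨ φ b ω = 1)
    (hE : ∀ b, ∫ ω, φ b ω ∂μ ≤ α * (k + lam) / B)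
    (hshape :
      ∑ u ∈ Finset.range (lam + 1),
          μ {ω | (k : ℝ) ≤ ∑ b, φ b ω ∧ ∑ b, φ b ω < (k : ℝ) + u}
        ≤ ∑ u ∈ Finset.range k,
            μ {ω | (k : ℝ) - u ≤ ∑ b, φ b ω ∧ ∑ b, φ b ω < (k : ℝ)}) :
    μ {ω | (k : ℝ) ≤ ∑ b, φ b ω} ≤ ENNReal.ofReal α := by
  have hmeasV : Measurable fun ω => ∑ b, φ b ω := Finset.measurable_sum _ fun b _ => hmeas b
  have hnat : ∀ ω, ∃ n : ℕ, ∑ b, φ b ω = n := fun ω =>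
    exists_nat_sum_eq_of_zero_or_one _ fun b _ => hval b ω
  have hint : ∀ b ∈ univ, Integrable (φ b) μ := fun b _ =>
    Integrable.of_bound (hmeas b).aestronglyMeasurable 1
      (ae_of_all _ fun ω => by rcases hval b ω with h | h <;> simp [h])
  have hmean : ∫⁻ ω, ENNReal.ofReal (∑ b, φ b ω) ∂μ ≤ ENNReal.ofReal (α * (k + lam)) := by
    have := lintegral_ofReal_sum_le_of_integral_le univ hint
      (fun b _ ω => by rcases hval b ω with h | h <;> simp [h]) fun b _ => hE b
    rwa [card_univ, Fintype.card_fin, mul_div_cancel₀ _ (Nat.cast_ne_zero.2 (by omega))] at this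
  exact measure_ge_le_of_smoothing hmeasV hnat (by omega) hmean hshape

/-- multi split coverage under the smoothing assumption: with
`τ = 1 - k/B`, `β = α(k+λ)/B < 1`, `φ b` {0,1}-valued with `E(φ b) ≤ β`,
`V = Σ_b φ b` satisfying the shape condition
`Σ_{u=0}^{k-1} P(V ∈ [k-u, k)) ≥ Σ_{u=0}^{λ} P(V ∈ [k, k+u))`, one has
`P(V ≥ k) ≤ α`, i.e. `P(Π > τ) ≥ 1 - α` for `Π = 1 - V/B`. -/
theorem multisplit_coverage_smoothed {Ω : Type*} [MeasurableSpace Ω]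
    (μ : Measure Ω) [IsProbabilityMeasure μ]
    (B : ℕ) (hB : 1 ≤ B) (α : ℝ) (hα : α ∈ Set.Ioo (0 : ℝ) 1)
    (k lam : ℕ) (hk : 1 ≤ k) (hkB : k ≤ B)
    (hβ : α * (k + lam) / B < 1)
    (φ : Fin B → Ω → ℝ) (hmeas : ∀ b, Measurable (φ b))
    (hval : ∀ b ω, φ b ω = 0 ∨ φ b ω = 1)
    (hE : ∀ b, ∫ ω, φ b ω ∂μ ≤ α * (k + lam) / B)
    (hshape :
      ∑ u ∈ Finset.range (lam + 1),
          μ {ω | (k : ℝ) ≤ ∑ b, φ b ω ∧ ∑ b, φ b ω < (k : ℝ) + u}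
        ≤ ∑ u ∈ Finset.range k,
            μ {ω | (k : ℝ) - u ≤ ∑ b, φ b ω ∧ ∑ b, φ b ω < (k : ℝ)}) :
    μ {ω | (k : ℝ) ≤ ∑ b, φ b ω} ≤ ENNReal.ofReal α :=
  multisplit_coverage_smoothed_general μ B hB α k lam hk φ hmeas hval hE hshape
end
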